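/- arXiv:2006.06150 — 2 statements merged into one kernel-verified Lean document; each statement's English description precedes it below -/
import Mathlib

section
/- With L ⊆ ℝ^{N×N} as above, the squared norm of the projection satisfies ‖x_{∥L}‖² = (1/N)[ ∑_j (∑_i x_{ij})² + ∑_i (∑_j x_{ij})² − (1/N)(∑_{ij} x_{ij})² ] for every x ∈ ℝ^{N×N}. -/
open Finset

section RowColumnProjection

variable {ι κ : Type*} [Fintype ι] [Fintype κ]

theorem sum_sum_add_sub_sq (a : ι → ℝ) (b : κ → ℝ) (s : ℝ) :
    ∑ i, ∑ j, (a i + b j - s) ^ 2 =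
      Fintype.card κ * ∑ i, a i ^ 2 + Fintype.card ι * ∑ j, b j ^ 2
        + 2 * (∑ i, a i) * (∑ j, b j)
        - 2 * s * (Fintype.card κ * ∑ i, a i + Fintype.card ι * ∑ j, b j)
        + Fintype.card ι * Fintype.card κ * s ^ 2 := by
  have expand : ∀ i j, (a i + b j - s) ^ 2 =
      a i ^ 2 + b j ^ 2 + 2 * a i * b j - 2 * s * a i - 2 * s * b j + s ^ 2 := by
    intro i j
    ring
  simp only [expand, sum_add_distrib, sum_sub_distrib, ← mul_sum, ← sum_mul, sum_const,
    card_univ, nsmul_eq_mul]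
  ring

/-- The orthogonal projection of `x` onto the span of the matrices with constant rows and
constant columns. -/
noncomputable def rowColProj (x : ι → κ → ℝ) : ι → κ → ℝ := fun i j =>
  (∑ j', x i j') / Fintype.card κ + (∑ i', x i' j) / Fintype.card ι
    - (∑ i', ∑ j', x i' j') / (Fintype.card ι * Fintype.card κ)

theorem sum_sq_rowColProj (x : ι → κ → ℝ) :
    ∑ i, ∑ j, rowColProj x i j ^ 2 =
      (∑ i, (∑ j, x i j) ^ 2) / Fintype.card κ + (∑ j, (∑ i, x i j) ^ 2) / Fintype.card ι
        - (∑ i, ∑ j, x i j) ^ 2 / (Fintype.card ι * Fintype.card κ) := by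
  rcases isEmpty_or_nonempty ι with hι | hι
  · simp
  rcases isEmpty_or_nonempty κ with hκ | hκ
  · simp
  have hm : (Fintype.card ι : ℝ) ≠ 0 := Nat.cast_ne_zero.mpr Fintype.card_ne_zero
  have hn : (Fintype.card κ : ℝ) ≠ 0 := Nat.cast_ne_zero.mpr Fintype.card_ne_zero
  have total_by_columns : ∑ j, ∑ i, x i j = ∑ i, ∑ j, x i j := sum_comm
  simp only [rowColProj, sum_sum_add_sub_sq, div_pow, ← sum_div, total_by_columns]
  field_simp
  ring

end RowColumnProjection

theorem stmt_11_general (N : ℕ) (x : Fin N → Fin N → ℝ)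
    (px : Fin N → Fin N → ℝ)
    (hpx : ∀ i j, px i j =
      (∑ j', x i j') / N + (∑ i', x i' j) / N - (∑ i', ∑ j', x i' j') / (N ^ 2)) :
    ∑ i, ∑ j, (px i j) ^ 2 =
      (1 / N) * ((∑ j, (∑ i, x i j) ^ 2) + (∑ i, (∑ j, x i j) ^ 2)
        - (1 / N) * (∑ i, ∑ j, x i j) ^ 2) := by
  have hpx_proj : px = rowColProj x := by
    ext i j
    simp only [hpx, rowColProj, Fintype.card_fin, sq]
  rw [hpx_proj, sum_sq_rowColProj]
  simp only [Fintype.card_fin]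
  ring

theorem stmt_11 (N : ℕ) (hN : 0 < N) (x : Fin N → Fin N → ℝ)
    (px : Fin N → Fin N → ℝ)
    (hpx : ∀ i j, px i j =
      (∑ j', x i j') / N + (∑ i', x i' j) / N - (∑ i', ∑ j', x i' j') / (N ^ 2)) :
    ∑ i, ∑ j, (px i j) ^ 2 =
      (1 / N) * ((∑ j, (∑ i, x i j) ^ 2) + (∑ i, (∑ j, x i j) ^ 2)
        - (1 / N) * (∑ i, ∑ j, x i j) ^ 2) :=
  stmt_11_general N x px hpx
end

section
/- Let Q^{t+1} = max(Q^t + A^t − S^t, 0) with 0 ≤ A^t ≤ A_max, 0 ≤ S^t ≤ S_max and Q^t ≥ 0. Then for any m ≥ 1, (Q^{t+m})² − (Q^t)² ≤ 2 Q^t ∑_{i=1}^m (A^{t+m−i} − S^{t+m−i}) + m·K₀(m), where K₀(m) = 2m(A_max + S_max)² + (A_max + S_max)². -/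
/-!
With `d u = A u - S u` and `C = Amax + Smax ≥ |d u|`, one step of the recursion gives
`Q (u+1)² - Q u² ≤ 2 Q u d u + d u²`, because `max x 0 ² ≤ x²`. Since `x ↦ max x 0` is
1-Lipschitz, `|Q (t+s) - Q t| ≤ s C`, so replacing `Q (t+s)` by `Q t` in the cross term of step
`t + s` costs at most `2 s C²`. Summing over `s < m` gives the error `m² C² ≤ m K₀(m)`.
-/

open Finset

theorem sq_max_zero_le_sq (x : ℝ) : max x 0 ^ 2 ≤ x ^ 2 := by
  rcases le_total x 0 with h | h
  · rw [max_eq_right h, zero_pow two_ne_zero]; exact sq_nonneg x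
  · rw [max_eq_left h]

theorem sum_Icc_sub_eq_sum_range {M : Type*} [AddCommMonoid M] (f : ℕ → M) (t m : ℕ) :
    ∑ i ∈ Icc 1 m, f (t + m - i) = ∑ s ∈ range m, f (t + s) := by
  refine sum_nbij' (fun i => m - i) (fun s => m - s) ?_ ?_ ?_ ?_ ?_ <;> intro i hi <;>
    simp only [mem_Icc, mem_range] at hi ⊢
  all_goals first | omega | congr 1; omega

section Lindley

variable {Q d : ℕ → ℝ}

theorem lindley_sq_sub_sq_le (hrec : ∀ t, Q (t + 1) = max (Q t + d t) 0) (u : ℕ) :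
    Q (u + 1) ^ 2 - Q u ^ 2 ≤ 2 * Q u * d u + d u ^ 2 :=
  calc Q (u + 1) ^ 2 - Q u ^ 2 ≤ (Q u + d u) ^ 2 - Q u ^ 2 := by
        rw [hrec]; linarith [sq_max_zero_le_sq (Q u + d u)]
    _ = 2 * Q u * d u + d u ^ 2 := by ring

theorem lindley_abs_sub_le (hrec : ∀ t, Q (t + 1) = max (Q t + d t) 0) {u : ℕ} (hQ : 0 ≤ Q u) :
    |Q (u + 1) - Q u| ≤ |d u| :=
  calc |Q (u + 1) - Q u| = |max (Q u + d u) 0 - max (Q u) 0| := by rw [hrec, max_eq_left hQ]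
    _ ≤ |Q u + d u - Q u| := abs_max_sub_max_le_abs _ _ _
    _ = |d u| := by rw [add_sub_cancel_left]

theorem lindley_abs_sub_le_mul (hrec : ∀ t, Q (t + 1) = max (Q t + d t) 0) (hQ : ∀ t, 0 ≤ Q t)
    {C : ℝ} (hd : ∀ t, |d t| ≤ C) (t s : ℕ) : |Q (t + s) - Q t| ≤ s * C := by
  induction s with
  | zero => simp
  | succ s ih =>
    calc |Q (t + s + 1) - Q t| ≤ |Q (t + s + 1) - Q (t + s)| + |Q (t + s) - Q t| :=
          abs_sub_le _ _ _
      _ ≤ C + s * C := add_le_add ((lindley_abs_sub_le hrec (hQ _)).trans (hd _)) ih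
      _ = (s + 1 : ℕ) * C := by push_cast; ring

theorem lindley_sq_sub_sq_le_sum (hrec : ∀ t, Q (t + 1) = max (Q t + d t) 0)
    (hQ : ∀ t, 0 ≤ Q t) {C : ℝ} (hd : ∀ t, |d t| ≤ C) (t n : ℕ) :
    Q (t + n) ^ 2 - Q t ^ 2 ≤ 2 * Q t * ∑ s ∈ range n, d (t + s) + (n * C) ^ 2 := by
  induction n with
  | zero => simp
  | succ n ih =>
    have hC : 0 ≤ C := (abs_nonneg _).trans (hd 0)
    have hstep := lindley_sq_sub_sq_le hrec (t + n)
    have hsq : d (t + n) ^ 2 ≤ C ^ 2 := sq_le_sq' (abs_le.1 (hd _)).1 (abs_le.1 (hd _)).2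
    have hcross : (Q (t + n) - Q t) * d (t + n) ≤ n * C * C := by
      refine (le_abs_self _).trans ?_
      rw [abs_mul]
      exact mul_le_mul (lindley_abs_sub_le_mul hrec hQ hd t n) (hd _) (abs_nonneg _)
        (by positivity)
    rw [← add_assoc, sum_range_succ]
    push_cast
    linear_combination ih + hstep + 2 * hcross + hsq

end Lindley

theorem stmt_17_general (Q A S : ℕ → ℝ) (Amax Smax : ℝ)
    (hA : ∀ t, 0 ≤ A t ∧ A t ≤ Amax) (hS : ∀ t, 0 ≤ S t ∧ S t ≤ Smax)
    (hQ0 : ∀ t, 0 ≤ Q t)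
    (hrec : ∀ t, Q (t + 1) = max (Q t + A t - S t) 0)
    (t m : ℕ) :
    Q (t + m) ^ 2 - Q t ^ 2 ≤
      2 * Q t * (∑ i ∈ Finset.Icc 1 m, (A (t + m - i) - S (t + m - i))) +
        m * (2 * m * (Amax + Smax) ^ 2 + (Amax + Smax) ^ 2) := by
  have hd : ∀ u, |A u - S u| ≤ Amax + Smax := fun u =>
    abs_le.2 ⟨by linarith [hA u, hS u], by linarith [hA u, hS u]⟩
  have hrec' : ∀ u, Q (u + 1) = max (Q u + (A u - S u)) 0 := fun u => by
    rw [hrec, add_sub_assoc]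
  rw [sum_Icc_sub_eq_sum_range (fun u => A u - S u)]
  calc Q (t + m) ^ 2 - Q t ^ 2
      ≤ 2 * Q t * ∑ s ∈ range m, (A (t + s) - S (t + s)) + (m * (Amax + Smax)) ^ 2 :=
        lindley_sq_sub_sq_le_sum hrec' hQ0 hd t m
    _ ≤ _ := by gcongr; nlinarith [sq_nonneg ((m : ℝ) * (Amax + Smax)), sq_nonneg (Amax + Smax)]

theorem stmt_17 (Q A S : ℕ → ℝ) (Amax Smax : ℝ)
    (hA : ∀ t, 0 ≤ A t ∧ A t ≤ Amax) (hS : ∀ t, 0 ≤ S t ∧ S t ≤ Smax)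
    (hQ0 : ∀ t, 0 ≤ Q t)
    (hrec : ∀ t, Q (t + 1) = max (Q t + A t - S t) 0)
    (t m : ℕ) (hm : 1 ≤ m) :
    Q (t + m) ^ 2 - Q t ^ 2 ≤
      2 * Q t * (∑ i ∈ Finset.Icc 1 m, (A (t + m - i) - S (t + m - i))) +
        m * (2 * m * (Amax + Smax) ^ 2 + (Amax + Smax) ^ 2) :=
  stmt_17_general Q A S Amax Smax hA hS hQ0 hrec t m
end
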